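/- arXiv:1907.00406 — 4 statements merged into one kernel-verified Lean document; each statement's English description precedes it below -/
import Mathlib

section
/- Per-step unconditional stability of the BDF2 scheme for a linear material law (Proposition 3.2, abstract form). Assume given u₋, u₀, u₊ ∈ V, p ∈ Q, X₋, X₀, X₊, Ẋ₋, Ẋ₀, Ẋ₊ ∈ S, λ ∈ Λ and w ∈ S such that: (i) ρ_f ⟨(3u₊ − 4u₀ + u₋)/(2Δt), u₊⟩ + b(u₊, u₊, u₊) + ν‖G u₊‖² − ⟨d u₊, p⟩ + c(λ, w) = 0; (ii) ⟨d u₊, q⟩ = 0 for all q ∈ Q; (iii) c(μ, w − (3X₊ − 4X₀ + X₋)/(2Δt)) = 0 for all μ ∈ Λ; (iv) Ẋ₊ = (3X₊ − 4X₀ + X₋)/(2Δt); (v) δρ ⟨(3Ẋ₊ − 4Ẋ₀ + Ẋ₋)/(2Δt), Y⟩ + κ⟨G_s X₊, G_s Y⟩ − c(λ, Y) = 0 for all Y ∈ S. Then, writing F_j = G_s X_j for j ∈ {−, 0, +}, one has (ρ_f/(4Δt)) Ψ(u₊, u₀, u₋) + ν‖G u₊‖² + (δρ/(4Δt)) Ψ(Ẋ₊,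 Ẋ₀, Ẋ₋) + (κ/(4Δt)) Ψ(F₊, F₀, F₋) ≤ 0. -/
/-!
Test the fluid equation with `u₊`, the structure equation with `Ẋ₊`, and the constraint with the
multiplier `λ`: the convection and pressure terms vanish, the coupling terms `c(λ, w)` and
`c(λ, Ẋ₊)` cancel, and since `G_s Ẋ₊` is the BDF2 difference quotient of the `F_j`, every inertial
and elastic term has the form `⟪(3a − 4b + c)/(2Δt), a⟫ = Ψ(a, b, c)/(4Δt)`. The left-hand side is
therefore exactly `0`.
-/

open scoped RealInnerProductSpace

/-- `Ψ(a, b, c) = ‖a‖² + ‖2a − b‖² − ‖b‖² − ‖2b − c‖² + ‖a − 2b + c‖²`. -/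
noncomputable def Psi {E : Type*} [NormedAddCommGroup E] [InnerProductSpace ℝ E]
    (a b c : E) : ℝ :=
  ‖a‖ ^ 2 + ‖(2 : ℝ) • a - b‖ ^ 2 - ‖b‖ ^ 2 - ‖(2 : ℝ) • b - c‖ ^ 2 + ‖a - (2 : ℝ) • b + c‖ ^ 2

noncomputable def bdf2Diff {E : Type*} [AddCommGroup E] [Module ℝ E] (Δt : ℝ) (a b c : E) : E :=
  (2 * Δt)⁻¹ • ((3 : ℝ) • a - (4 : ℝ) • b + c)

theorem LinearMap.map_bdf2Diff {E F : Type*} [AddCommGroup E] [Module ℝ E] [AddCommGroup F]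
    [Module ℝ F] (f : E →ₗ[ℝ] F) (Δt : ℝ) (a b c : E) :
    f (bdf2Diff Δt a b c) = bdf2Diff Δt (f a) (f b) (f c) := by
  simp only [bdf2Diff, map_smul, map_add, map_sub]

section InnerProductSpace

variable {E : Type*} [NormedAddCommGroup E] [InnerProductSpace ℝ E]

theorem Psi_eq_two_mul_inner (a b c : E) :
    Psi a b c = 2 * ⟪(3 : ℝ) • a - (4 : ℝ) • b + c, a⟫ := by
  simp only [Psi, ← real_inner_self_eq_norm_sq, inner_sub_left, inner_sub_right,
    inner_add_left, inner_add_right, real_inner_smul_left, real_inner_smul_right,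
    real_inner_comm b a, real_inner_comm c a, real_inner_comm c b]
  ring

theorem inner_bdf2Diff_self (Δt : ℝ) (a b c : E) :
    ⟪bdf2Diff Δt a b c, a⟫ = Psi a b c / (4 * Δt) := by
  rw [bdf2Diff, real_inner_smul_left, Psi_eq_two_mul_inner]
  field_simp
  ring

end InnerProductSpace

theorem bdf2_per_step_stability_general
    {V Q S M N Λ : Type*}
    [NormedAddCommGroup V] [InnerProductSpace ℝ V]
    [NormedAddCommGroup Q] [InnerProductSpace ℝ Q]
    [NormedAddCommGroup S] [InnerProductSpace ℝ S]
    [NormedAddCommGroup M] [InnerProductSpace ℝ M]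
    [NormedAddCommGroup N] [InnerProductSpace ℝ N]
    [NormedAddCommGroup Λ] [InnerProductSpace ℝ Λ]
    (G : V →ₗ[ℝ] M) (d : V →ₗ[ℝ] Q) (Gs : S →ₗ[ℝ] N)
    (c : Λ →ₗ[ℝ] S →ₗ[ℝ] ℝ) (b : V →ₗ[ℝ] V →ₗ[ℝ] V →ₗ[ℝ] ℝ)
    (hb : ∀ v w : V, b v w w = 0)
    (ρf δρ ν κ Δt : ℝ)
    (um u₀ up : V) (p : Q) (Xm X₀ Xp dXm dX₀ dXp : S) (lam : Λ) (w : S)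
    (h1 : ρf * ⟪(2 * Δt)⁻¹ • ((3 : ℝ) • up - (4 : ℝ) • u₀ + um), up⟫
        + b up up up + ν * ‖G up‖ ^ 2 - ⟪d up, p⟫ + c lam w = 0)
    (h2 : ∀ q : Q, ⟪d up, q⟫ = 0)
    (h3 : ∀ μ : Λ, c μ (w - (2 * Δt)⁻¹ • ((3 : ℝ) • Xp - (4 : ℝ) • X₀ + Xm)) = 0)
    (h4 : dXp = (2 * Δt)⁻¹ • ((3 : ℝ) • Xp - (4 : ℝ) • X₀ + Xm))
    (h5 : ∀ Y : S, δρ * ⟪(2 * Δt)⁻¹ • ((3 : ℝ) • dXp - (4 : ℝ) • dX₀ + dXm), Y⟫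
        + κ * ⟪Gs Xp, Gs Y⟫ - c lam Y = 0) :
    (ρf / (4 * Δt)) * Psi up u₀ um + ν * ‖G up‖ ^ 2
      + (δρ / (4 * Δt)) * Psi dXp dX₀ dXm
      + (κ / (4 * Δt)) * Psi (Gs Xp) (Gs X₀) (Gs Xm) ≤ 0 := by
  change dXp = bdf2Diff Δt Xp X₀ Xm at h4
  have fluid : ρf * (Psi up u₀ um / (4 * Δt)) + ν * ‖G up‖ ^ 2 + c lam w = 0 := by
    change ρf * ⟪bdf2Diff Δt up u₀ um, up⟫ + _ + _ - _ + _ = 0 at h1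
    rwa [inner_bdf2Diff_self, hb, h2, add_zero, sub_zero] at h1
  have coupling : c lam w = c lam dXp := by
    rw [h4, ← sub_eq_zero, ← map_sub]
    exact h3 lam
  have solid : δρ * (Psi dXp dX₀ dXm / (4 * Δt))
      + κ * (Psi (Gs Xp) (Gs X₀) (Gs Xm) / (4 * Δt)) - c lam dXp = 0 := by
    have h := h5 dXp
    change δρ * ⟪bdf2Diff Δt dXp dX₀ dXm, dXp⟫ + _ - _ = 0 at h
    have hF : Gs dXp = bdf2Diff Δt (Gs Xp) (Gs X₀) (Gs Xm) := by rw [h4, LinearMap.map_bdf2Diff]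
    rwa [hF, real_inner_comm _ (Gs Xp), inner_bdf2Diff_self, inner_bdf2Diff_self] at h
  linear_combination fluid + solid - coupling

theorem bdf2_per_step_stability
    {V Q S M N Λ : Type*}
    [NormedAddCommGroup V] [InnerProductSpace ℝ V]
    [NormedAddCommGroup Q] [InnerProductSpace ℝ Q]
    [NormedAddCommGroup S] [InnerProductSpace ℝ S]
    [NormedAddCommGroup M] [InnerProductSpace ℝ M]
    [NormedAddCommGroup N] [InnerProductSpace ℝ N]
    [NormedAddCommGroup Λ] [InnerProductSpace ℝ Λ]
    (G : V →ₗ[ℝ] M) (d : V →ₗ[ℝ] Q) (Gs : S →ₗ[ℝ] N)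
    (c : Λ →ₗ[ℝ] S →ₗ[ℝ] ℝ) (b : V →ₗ[ℝ] V →ₗ[ℝ] V →ₗ[ℝ] ℝ)
    (hb : ∀ v w : V, b v w w = 0)
    (ρf δρ ν κ Δt : ℝ)
    (hρf : 0 ≤ ρf) (hδρ : 0 ≤ δρ) (hν : 0 ≤ ν) (hκ : 0 ≤ κ) (hΔt : 0 < Δt)
    (um u₀ up : V) (p : Q) (Xm X₀ Xp dXm dX₀ dXp : S) (lam : Λ) (w : S)
    (h1 : ρf * ⟪(2 * Δt)⁻¹ • ((3 : ℝ) • up - (4 : ℝ) • u₀ + um), up⟫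
        + b up up up + ν * ‖G up‖ ^ 2 - ⟪d up, p⟫ + c lam w = 0)
    (h2 : ∀ q : Q, ⟪d up, q⟫ = 0)
    (h3 : ∀ μ : Λ, c μ (w - (2 * Δt)⁻¹ • ((3 : ℝ) • Xp - (4 : ℝ) • X₀ + Xm)) = 0)
    (h4 : dXp = (2 * Δt)⁻¹ • ((3 : ℝ) • Xp - (4 : ℝ) • X₀ + Xm))
    (h5 : ∀ Y : S, δρ * ⟪(2 * Δt)⁻¹ • ((3 : ℝ) • dXp - (4 : ℝ) • dX₀ + dXm), Y⟫
        + κ * ⟪Gs Xp, Gs Y⟫ - c lam Y = 0) :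
    (ρf / (4 * Δt)) * Psi up u₀ um + ν * ‖G up‖ ^ 2
      + (δρ / (4 * Δt)) * Psi dXp dX₀ dXm
      + (κ / (4 * Δt)) * Psi (Gs Xp) (Gs X₀) (Gs Xm) ≤ 0 :=
  bdf2_per_step_stability_general G d Gs c b hb ρf δρ ν κ Δt um u₀ up p Xm X₀ Xp dXm dX₀ dXp lam w
    h1 h2 h3 h4 h5
end

section
/- Unconditional stability bound for the BDF2 scheme for a linear material law (summed estimate (3.6)/eq:matrix, abstract form). Let m ≥ 2 and assume given sequences u : ℕ → V, p : ℕ → Q, X, Ẋ : ℕ → S, λ : ℕ → Λ and w : ℕ → S such that for every n with 1 ≤ n ≤ m − 1: (i) ρ_f ⟨(3u(n+1) − 4u(n) + u(n−1))/(2Δt), u(n+1)⟩ + b(u(n+1), u(n+1), u(n+1)) + ν‖G u(n+1)‖² − ⟨d u(n+1), p(n+1)⟩ + c(λ(n+1), w(n+1)) = 0; (ii) ⟨d u(n+1), q⟩ = 0 for all q ∈ Q; (iii) c(μ, w(n+1) − (3X(n+1) − 4X(n) + X(n−1))/(2Δt)) = 0 for all μ ∈ Λ; (iv) Ẋ(n+1)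 = (3X(n+1) − 4X(n) + X(n−1))/(2Δt); (v) δρ ⟨(3Ẋ(n+1) − 4Ẋ(n) + Ẋ(n−1))/(2Δt), Y⟩ + κ⟨G_s X(n+1), G_s Y⟩ − c(λ(n+1), Y) = 0 for all Y ∈ S. Then, writing F(n) = G_s X(n), one has ρ_f(‖u(m)‖² + ‖2u(m) − u(m−1)‖²) + 4Δt ν Σ_{n=2}^{m} ‖G u(n)‖² + δρ(‖Ẋ(m)‖² + ‖2Ẋ(m) − Ẋ(m−1)‖²) + κ(‖F(m)‖² + ‖2F(m) − F(m−1)‖²) ≤ ρ_f(‖u(1)‖² + ‖2u(1) − u(0)‖²) + δρ(‖Ẋ(1)‖² + ‖2Ẋ(1) − Ẋ(0)‖²) + κ(‖F(1)‖² + ‖2F(1) − F(0)‖²). -/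
/-!
Testing the fluid equation with `u (n+1)` and the structure equation with `Ẋ (n+1)`, the
incompressibility constraint removes the pressure, skew-symmetry removes the convection term,
and the kinematic coupling makes the two Lagrange multiplier terms cancel. What is left is a sum
of BDF2 difference quotients tested against the new iterate, and the identity
`2⟪3a - 4b + c, a⟫ = (‖a‖² + ‖2a - b‖²) - (‖b‖² + ‖2b - c‖²) + ‖a - 2b + c‖²`
turns each of them into an increment of the BDF2 energy plus a nonnegative numerical dissipation.
Dropping the dissipation and telescoping gives the bound.
-/

open scoped RealInnerProductSpace
open Finset

section BDF2Energy

variable {E : Type*} [NormedAddCommGroup E] [InnerProductSpace ℝ E]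

def bdf2Energy (a b : E) : ℝ := ‖a‖ ^ 2 + ‖(2 : ℝ) • a - b‖ ^ 2

theorem two_inner_bdf2_eq (a b c : E) :
    2 * ⟪(3 : ℝ) • a - (4 : ℝ) • b + c, a⟫
      = bdf2Energy a b - bdf2Energy b c + ‖a - (2 : ℝ) • b + c‖ ^ 2 := by
  simp only [bdf2Energy, ← real_inner_self_eq_norm_sq, inner_sub_left, inner_add_left,
    inner_sub_right, inner_add_right, real_inner_smul_left, real_inner_smul_right]
  linarith [real_inner_comm a b, real_inner_comm a c, real_inner_comm b c]

theorem bdf2Energy_sub_le_inner {ρ Δt : ℝ} (hρ : 0 ≤ ρ) (hΔt : Δt ≠ 0) (a b c : E) :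
    ρ * (bdf2Energy a b - bdf2Energy b c)
      ≤ 4 * Δt * (ρ * ⟪(2 * Δt)⁻¹ • ((3 : ℝ) • a - (4 : ℝ) • b + c), a⟫) := by
  have hdiss : 0 ≤ ρ * ‖a - (2 : ℝ) • b + c‖ ^ 2 := by positivity
  calc ρ * (bdf2Energy a b - bdf2Energy b c)
      ≤ ρ * (2 * ⟪(3 : ℝ) • a - (4 : ℝ) • b + c, a⟫) := by
        rw [two_inner_bdf2_eq]; linarith
    _ = 4 * Δt * (ρ * ⟪(2 * Δt)⁻¹ • ((3 : ℝ) • a - (4 : ℝ) • b + c), a⟫) := by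
        rw [real_inner_smul_left]; field_simp; ring

end BDF2Energy

theorem add_sum_Icc_le_of_succ_add_le {E D : ℕ → ℝ} {m : ℕ} (hm : 1 ≤ m)
    (h : ∀ n, 1 ≤ n → n < m → E (n + 1) + D (n + 1) ≤ E n) :
    E m + ∑ n ∈ Icc 2 m, D n ≤ E 1 := by
  induction m, hm using Nat.le_induction with
  | base => simp
  | succ k hk ih =>
    rw [sum_Icc_succ_top (by omega)]
    linarith [ih fun n hn hnk => h n hn (by omega), h k hk (by omega)]

section FSIScheme

variable {V Q S M N Λ : Type*}
    [NormedAddCommGroup V] [InnerProductSpace ℝ V]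
    [NormedAddCommGroup Q] [InnerProductSpace ℝ Q]
    [NormedAddCommGroup S] [InnerProductSpace ℝ S]
    [NormedAddCommGroup M] [InnerProductSpace ℝ M]
    [NormedAddCommGroup N] [InnerProductSpace ℝ N]
    [NormedAddCommGroup Λ] [InnerProductSpace ℝ Λ]

theorem bdf2_step_energy_le
    (G : V →ₗ[ℝ] M) (d : V →ₗ[ℝ] Q) (Gs : S →ₗ[ℝ] N)
    (c : Λ →ₗ[ℝ] S →ₗ[ℝ] ℝ) (b : V →ₗ[ℝ] V →ₗ[ℝ] V →ₗ[ℝ] ℝ)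
    (hb : ∀ v w : V, b v w w = 0) {ρf δρ ν κ Δt : ℝ}
    (hρf : 0 ≤ ρf) (hδρ : 0 ≤ δρ) (hκ : 0 ≤ κ) (hΔt : Δt ≠ 0)
    {u₀ u₁ u₂ : V} {p : Q} {X₀ X₁ X₂ dX₀ dX₁ dX₂ w : S} {lam : Λ}
    (h1 : ρf * ⟪(2 * Δt)⁻¹ • ((3 : ℝ) • u₂ - (4 : ℝ) • u₁ + u₀), u₂⟫
        + b u₂ u₂ u₂ + ν * ‖G u₂‖ ^ 2 - ⟪d u₂, p⟫ + c lam w = 0)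
    (h2 : ⟪d u₂, p⟫ = 0)
    (h3 : c lam (w - (2 * Δt)⁻¹ • ((3 : ℝ) • X₂ - (4 : ℝ) • X₁ + X₀)) = 0)
    (h4 : dX₂ = (2 * Δt)⁻¹ • ((3 : ℝ) • X₂ - (4 : ℝ) • X₁ + X₀))
    (h5 : δρ * ⟪(2 * Δt)⁻¹ • ((3 : ℝ) • dX₂ - (4 : ℝ) • dX₁ + dX₀), dX₂⟫
        + κ * ⟪Gs X₂, Gs dX₂⟫ - c lam dX₂ = 0) :
    ρf * bdf2Energy u₂ u₁ + 4 * Δt * ν * ‖G u₂‖ ^ 2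
        + δρ * bdf2Energy dX₂ dX₁ + κ * bdf2Energy (Gs X₂) (Gs X₁)
      ≤ ρf * bdf2Energy u₁ u₀ + δρ * bdf2Energy dX₁ dX₀ + κ * bdf2Energy (Gs X₁) (Gs X₀) := by
  rw [hb, h2] at h1
  have hcoupling : c lam w = c lam dX₂ := by
    rwa [map_sub, ← h4, sub_eq_zero] at h3
  have hGs : Gs dX₂ = (2 * Δt)⁻¹ • ((3 : ℝ) • Gs X₂ - (4 : ℝ) • Gs X₁ + Gs X₀) := by
    rw [h4]; simp only [map_smul, map_add, map_sub]
  rw [hGs, real_inner_comm _ (Gs X₂)] at h5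
  have hu := bdf2Energy_sub_le_inner hρf hΔt u₂ u₁ u₀
  have hdX := bdf2Energy_sub_le_inner hδρ hΔt dX₂ dX₁ dX₀
  have hF := bdf2Energy_sub_le_inner hκ hΔt (Gs X₂) (Gs X₁) (Gs X₀)
  linear_combination hu + hdX + hF + 4 * Δt * (h1 + h5 - hcoupling)

end FSIScheme

theorem bdf2_summed_stability_general
    {V Q S M N Λ : Type*}
    [NormedAddCommGroup V] [InnerProductSpace ℝ V]
    [NormedAddCommGroup Q] [InnerProductSpace ℝ Q]
    [NormedAddCommGroup S] [InnerProductSpace ℝ S]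
    [NormedAddCommGroup M] [InnerProductSpace ℝ M]
    [NormedAddCommGroup N] [InnerProductSpace ℝ N]
    [NormedAddCommGroup Λ] [InnerProductSpace ℝ Λ]
    (G : V →ₗ[ℝ] M) (d : V →ₗ[ℝ] Q) (Gs : S →ₗ[ℝ] N)
    (c : Λ →ₗ[ℝ] S →ₗ[ℝ] ℝ) (b : V →ₗ[ℝ] V →ₗ[ℝ] V →ₗ[ℝ] ℝ)
    (hb : ∀ v w : V, b v w w = 0)
    (ρf δρ ν κ Δt : ℝ)
    (hρf : 0 ≤ ρf) (hδρ : 0 ≤ δρ) (hκ : 0 ≤ κ) (hΔt : 0 < Δt)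
    (m : ℕ) (hm : 2 ≤ m)
    (u : ℕ → V) (p : ℕ → Q) (X dX : ℕ → S) (lam : ℕ → Λ) (w : ℕ → S)
    (h1 : ∀ n, 1 ≤ n → n ≤ m - 1 →
      ρf * ⟪(2 * Δt)⁻¹ • ((3 : ℝ) • u (n + 1) - (4 : ℝ) • u n + u (n - 1)), u (n + 1)⟫
        + b (u (n + 1)) (u (n + 1)) (u (n + 1)) + ν * ‖G (u (n + 1))‖ ^ 2
        - ⟪d (u (n + 1)), p (n + 1)⟫ + c (lam (n + 1)) (w (n + 1)) = 0)
    (h2 : ∀ n, 1 ≤ n → n ≤ m - 1 → ∀ q : Q, ⟪d (u (n + 1)), q⟫ = 0)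
    (h3 : ∀ n, 1 ≤ n → n ≤ m - 1 → ∀ μ : Λ,
      c μ (w (n + 1) - (2 * Δt)⁻¹ • ((3 : ℝ) • X (n + 1) - (4 : ℝ) • X n + X (n - 1))) = 0)
    (h4 : ∀ n, 1 ≤ n → n ≤ m - 1 →
      dX (n + 1) = (2 * Δt)⁻¹ • ((3 : ℝ) • X (n + 1) - (4 : ℝ) • X n + X (n - 1)))
    (h5 : ∀ n, 1 ≤ n → n ≤ m - 1 → ∀ Y : S,
      δρ * ⟪(2 * Δt)⁻¹ • ((3 : ℝ) • dX (n + 1) - (4 : ℝ) • dX n + dX (n - 1)), Y⟫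
        + κ * ⟪Gs (X (n + 1)), Gs Y⟫ - c (lam (n + 1)) Y = 0) :
    ρf * (‖u m‖ ^ 2 + ‖(2 : ℝ) • u m - u (m - 1)‖ ^ 2)
      + 4 * Δt * ν * ∑ n ∈ Finset.Icc 2 m, ‖G (u n)‖ ^ 2
      + δρ * (‖dX m‖ ^ 2 + ‖(2 : ℝ) • dX m - dX (m - 1)‖ ^ 2)
      + κ * (‖Gs (X m)‖ ^ 2 + ‖(2 : ℝ) • Gs (X m) - Gs (X (m - 1))‖ ^ 2)
      ≤ ρf * (‖u 1‖ ^ 2 + ‖(2 : ℝ) • u 1 - u 0‖ ^ 2)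
        + δρ * (‖dX 1‖ ^ 2 + ‖(2 : ℝ) • dX 1 - dX 0‖ ^ 2)
        + κ * (‖Gs (X 1)‖ ^ 2 + ‖(2 : ℝ) • Gs (X 1) - Gs (X 0)‖ ^ 2) := by
  let energy n := ρf * bdf2Energy (u n) (u (n - 1)) + δρ * bdf2Energy (dX n) (dX (n - 1))
    + κ * bdf2Energy (Gs (X n)) (Gs (X (n - 1)))
  have hstep : ∀ n, 1 ≤ n → n < m →
      energy (n + 1) + 4 * Δt * ν * ‖G (u (n + 1))‖ ^ 2 ≤ energy n := fun n hn hnm => by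
    have hn' : n ≤ m - 1 := by omega
    have := bdf2_step_energy_le G d Gs c b hb hρf hδρ hκ hΔt.ne' (h1 n hn hn')
      (h2 n hn hn' _) (h3 n hn hn' _) (h4 n hn hn') (h5 n hn hn' _)
    simp only [energy, Nat.add_sub_cancel]
    linarith
  have hsum := add_sum_Icc_le_of_succ_add_le (E := energy)
    (D := fun n => 4 * Δt * ν * ‖G (u n)‖ ^ 2) (by omega) hstep
  simp only [energy, bdf2Energy, ← mul_sum] at hsum
  linarith

theorem bdf2_summed_stability
    {V Q S M N Λ : Type*}
    [NormedAddCommGroup V] [InnerProductSpace ℝ V]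
    [NormedAddCommGroup Q] [InnerProductSpace ℝ Q]
    [NormedAddCommGroup S] [InnerProductSpace ℝ S]
    [NormedAddCommGroup M] [InnerProductSpace ℝ M]
    [NormedAddCommGroup N] [InnerProductSpace ℝ N]
    [NormedAddCommGroup Λ] [InnerProductSpace ℝ Λ]
    (G : V →ₗ[ℝ] M) (d : V →ₗ[ℝ] Q) (Gs : S →ₗ[ℝ] N)
    (c : Λ →ₗ[ℝ] S →ₗ[ℝ] ℝ) (b : V →ₗ[ℝ] V →ₗ[ℝ] V →ₗ[ℝ] ℝ)
    (hb : ∀ v w : V, b v w w = 0)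
    (ρf δρ ν κ Δt : ℝ)
    (hρf : 0 ≤ ρf) (hδρ : 0 ≤ δρ) (hν : 0 ≤ ν) (hκ : 0 ≤ κ) (hΔt : 0 < Δt)
    (m : ℕ) (hm : 2 ≤ m)
    (u : ℕ → V) (p : ℕ → Q) (X dX : ℕ → S) (lam : ℕ → Λ) (w : ℕ → S)
    (h1 : ∀ n, 1 ≤ n → n ≤ m - 1 →
      ρf * ⟪(2 * Δt)⁻¹ • ((3 : ℝ) • u (n + 1) - (4 : ℝ) • u n + u (n - 1)), u (n + 1)⟫
        + b (u (n + 1)) (u (n + 1)) (u (n + 1)) + ν * ‖G (u (n + 1))‖ ^ 2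
        - ⟪d (u (n + 1)), p (n + 1)⟫ + c (lam (n + 1)) (w (n + 1)) = 0)
    (h2 : ∀ n, 1 ≤ n → n ≤ m - 1 → ∀ q : Q, ⟪d (u (n + 1)), q⟫ = 0)
    (h3 : ∀ n, 1 ≤ n → n ≤ m - 1 → ∀ μ : Λ,
      c μ (w (n + 1) - (2 * Δt)⁻¹ • ((3 : ℝ) • X (n + 1) - (4 : ℝ) • X n + X (n - 1))) = 0)
    (h4 : ∀ n, 1 ≤ n → n ≤ m - 1 →
      dX (n + 1) = (2 * Δt)⁻¹ • ((3 : ℝ) • X (n + 1) - (4 : ℝ) • X n + X (n - 1)))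
    (h5 : ∀ n, 1 ≤ n → n ≤ m - 1 → ∀ Y : S,
      δρ * ⟪(2 * Δt)⁻¹ • ((3 : ℝ) • dX (n + 1) - (4 : ℝ) • dX n + dX (n - 1)), Y⟫
        + κ * ⟪Gs (X (n + 1)), Gs Y⟫ - c (lam (n + 1)) Y = 0) :
    ρf * (‖u m‖ ^ 2 + ‖(2 : ℝ) • u m - u (m - 1)‖ ^ 2)
      + 4 * Δt * ν * ∑ n ∈ Finset.Icc 2 m, ‖G (u n)‖ ^ 2
      + δρ * (‖dX m‖ ^ 2 + ‖(2 : ℝ) • dX m - dX (m - 1)‖ ^ 2)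
      + κ * (‖Gs (X m)‖ ^ 2 + ‖(2 : ℝ) • Gs (X m) - Gs (X (m - 1))‖ ^ 2)
      ≤ ρf * (‖u 1‖ ^ 2 + ‖(2 : ℝ) • u 1 - u 0‖ ^ 2)
        + δρ * (‖dX 1‖ ^ 2 + ‖(2 : ℝ) • dX 1 - dX 0‖ ^ 2)
        + κ * (‖Gs (X 1)‖ ^ 2 + ‖(2 : ℝ) • Gs (X 1) - Gs (X 0)‖ ^ 2) :=
  bdf2_summed_stability_general G d Gs c b hb ρf δρ ν κ Δt hρf hδρ hκ hΔt m hm u p X dX lam w h1 h2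
    h3 h4 h5
end

section
/- Per-step unconditional stability of the Crank–Nicolson midpoint scheme (Proposition 3.3, abstract form). Assume given u₀, u₁ ∈ V, p ∈ Q, X₀, X₁, Ẋ₀, Ẋ₁ ∈ S, λ ∈ Λ and w ∈ S, and write m = (u₁ + u₀)/2 and F_j = G_s X_j for j ∈ {0, 1}. Assume: (i) ρ_f ⟨(u₁ − u₀)/Δt, m⟩ + b(m, m, m) + ν‖G m‖² − ⟨d m, p⟩ + c(λ, w) = 0; (ii) ⟨d u₀, q⟩ = 0 and ⟨d u₁, q⟩ = 0 for all q ∈ Q; (iii) (Ẋ₁ + Ẋ₀)/2 = (X₁ − X₀)/Δt; (iv) δρ ⟨(Ẋ₁ − Ẋ₀)/Δt, Y⟩ + ⟨P(F₁), G_s Y⟩ − c(λ, Y) = 0 for all Y ∈ S; (v) c(μ, w − (X₁ − X₀)/Δt) = 0 for all μ ∈ Λ. Then (ρ_f/(2Δt))(‖u₁‖² − ‖u₀‖²) + (ν/4)‖G u₁ + G u₀‖² + (δρ/(2Δt))(‖Ẋ₁‖² − ‖Ẋ₀‖²) + (W(F₁) − W(F₀))/Δt ≤ 0. -/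
open scoped RealInnerProductSpace

/-!
Test each equation of the scheme with the midpoint of its own unknowns. In the fluid equation the
convection term vanishes by skew-symmetry, the pressure term by the discrete incompressibility of
`u₀` and `u₁`, and the time-difference term telescopes to `‖u₁‖² - ‖u₀‖²`. In the structure
equation the test function `(X₁ - X₀) / Δt` is at the same time the velocity midpoint, so the
inertia term telescopes as well, and the coupling term `c λ ·` cancels the fluid one by the
constraint on `w`. What remains is `⟪P F₁, F₁ - F₀⟫ / Δt`, which dominates `(W F₁ - W F₀) / Δt`
by convexity of `W`.
-/

theorem ConvexOn.le_sub_of_hasFDerivAt {E : Type*} [NormedAddCommGroup E] [NormedSpace ℝ E]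
    {f : E → ℝ} {f' : E →L[ℝ] ℝ} {x : E} (hf : ConvexOn ℝ Set.univ f)
    (hf' : HasFDerivAt f f' x) (y : E) :
    f' (y - x) ≤ f y - f x := by
  let ℓ : ℝ →ᵃ[ℝ] E := AffineMap.lineMap x y
  have hderiv : HasDerivAt (f ∘ ℓ) (f' (y - x)) 0 := by
    have hf'₀ : HasFDerivAt f f' (ℓ 0) := by simpa [ℓ] using hf'
    exact hf'₀.comp_hasDerivAt 0 AffineMap.hasDerivAt_lineMap
  simpa [ℓ, slope_def_field] using
    (hf.comp_affineMap ℓ).le_slope_of_hasDerivAt (Set.mem_univ _) (Set.mem_univ _) zero_lt_one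
      hderiv

theorem real_inner_inv_smul_sub_half_add {E : Type*} [NormedAddCommGroup E]
    [InnerProductSpace ℝ E] (t : ℝ) (x y : E) :
    ⟪t⁻¹ • (x - y), (2 : ℝ)⁻¹ • (x + y)⟫ = (‖x‖ ^ 2 - ‖y‖ ^ 2) / (2 * t) := by
  rw [real_inner_smul_left, real_inner_smul_right, inner_sub_left, inner_add_right,
    inner_add_right, real_inner_self_eq_norm_sq, real_inner_self_eq_norm_sq, real_inner_comm y x]
  field_simp
  ring

section EnergyIdentities

variable {V Q S M N Λ : Type*}
  [NormedAddCommGroup V] [InnerProductSpace ℝ V]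
  [NormedAddCommGroup Q] [InnerProductSpace ℝ Q]
  [NormedAddCommGroup S] [InnerProductSpace ℝ S]
  [NormedAddCommGroup M] [InnerProductSpace ℝ M]
  [NormedAddCommGroup N] [InnerProductSpace ℝ N]
  [AddCommGroup Λ] [Module ℝ Λ]

theorem fluid_energy_identity (G : V →ₗ[ℝ] M) (d : V →ₗ[ℝ] Q) (c : Λ →ₗ[ℝ] S →ₗ[ℝ] ℝ)
    (b : V →ₗ[ℝ] V →ₗ[ℝ] V →ₗ[ℝ] ℝ) (hb : ∀ v w : V, b v w w = 0) (ρf ν Δt : ℝ)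
    (u₀ u₁ : V) (p : Q) (lam : Λ) (w : S)
    (h1 : ρf * ⟪Δt⁻¹ • (u₁ - u₀), (2 : ℝ)⁻¹ • (u₁ + u₀)⟫
        + b ((2 : ℝ)⁻¹ • (u₁ + u₀)) ((2 : ℝ)⁻¹ • (u₁ + u₀)) ((2 : ℝ)⁻¹ • (u₁ + u₀))
        + ν * ‖G ((2 : ℝ)⁻¹ • (u₁ + u₀))‖ ^ 2
        - ⟪d ((2 : ℝ)⁻¹ • (u₁ + u₀)), p⟫ + c lam w = 0)
    (h2₀ : ⟪d u₀, p⟫ = 0) (h2₁ : ⟪d u₁, p⟫ = 0) :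
    (ρf / (2 * Δt)) * (‖u₁‖ ^ 2 - ‖u₀‖ ^ 2) + (ν / 4) * ‖G u₁ + G u₀‖ ^ 2 + c lam w = 0 := by
  have hpressure : ⟪d ((2 : ℝ)⁻¹ • (u₁ + u₀)), p⟫ = 0 := by
    simp [real_inner_smul_left, inner_add_left, h2₀, h2₁]
  have hviscous : ‖G ((2 : ℝ)⁻¹ • (u₁ + u₀))‖ ^ 2 = ‖G u₁ + G u₀‖ ^ 2 / 4 := by
    rw [map_smul, map_add, norm_smul, mul_pow]
    norm_num
    ring
  rw [real_inner_inv_smul_sub_half_add, hb, hpressure, hviscous] at h1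
  linear_combination h1

theorem structure_energy_identity (Gs : S →ₗ[ℝ] N) (c : Λ →ₗ[ℝ] S →ₗ[ℝ] ℝ) (δρ Δt : ℝ)
    (P : N → N) (X₀ X₁ dX₀ dX₁ : S) (lam : Λ) (w : S)
    (h3 : (2 : ℝ)⁻¹ • (dX₁ + dX₀) = Δt⁻¹ • (X₁ - X₀))
    (h4 : δρ * ⟪Δt⁻¹ • (dX₁ - dX₀), Δt⁻¹ • (X₁ - X₀)⟫
        + ⟪P (Gs X₁), Gs (Δt⁻¹ • (X₁ - X₀))⟫ - c lam (Δt⁻¹ • (X₁ - X₀)) = 0)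
    (h5 : c lam (w - Δt⁻¹ • (X₁ - X₀)) = 0) :
    (δρ / (2 * Δt)) * (‖dX₁‖ ^ 2 - ‖dX₀‖ ^ 2)
      + Δt⁻¹ * ⟪P (Gs X₁), Gs X₁ - Gs X₀⟫ - c lam w = 0 := by
  rw [← h3, real_inner_inv_smul_sub_half_add, h3, map_smul, map_sub, real_inner_smul_right] at h4
  rw [map_sub] at h5
  linear_combination h4 - h5

end EnergyIdentities

theorem crank_nicolson_midpoint_per_step_stability_general
    {V Q S M N Λ : Type*}
    [NormedAddCommGroup V] [InnerProductSpace ℝ V]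
    [NormedAddCommGroup Q] [InnerProductSpace ℝ Q]
    [NormedAddCommGroup S] [InnerProductSpace ℝ S]
    [NormedAddCommGroup M] [InnerProductSpace ℝ M]
    [NormedAddCommGroup N] [InnerProductSpace ℝ N]
    [NormedAddCommGroup Λ] [InnerProductSpace ℝ Λ]
    (G : V →ₗ[ℝ] M) (d : V →ₗ[ℝ] Q) (Gs : S →ₗ[ℝ] N)
    (c : Λ →ₗ[ℝ] S →ₗ[ℝ] ℝ) (b : V →ₗ[ℝ] V →ₗ[ℝ] V →ₗ[ℝ] ℝ)
    (hb : ∀ v w : V, b v w w = 0)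
    (ρf δρ ν Δt : ℝ)
    (hΔt : 0 < Δt)
    (W : N → ℝ) (hW : ConvexOn ℝ Set.univ W)
    (DW : N → N →L[ℝ] ℝ) (hDW : ∀ F : N, HasFDerivAt W (DW F) F)
    (P : N → N) (hP : ∀ F H : N, ⟪P F, H⟫ = DW F H)
    (u₀ u₁ : V) (p : Q) (X₀ X₁ dX₀ dX₁ : S) (lam : Λ) (w : S)
    (h1 : ρf * ⟪Δt⁻¹ • (u₁ - u₀), (2 : ℝ)⁻¹ • (u₁ + u₀)⟫
        + b ((2 : ℝ)⁻¹ • (u₁ + u₀)) ((2 : ℝ)⁻¹ • (u₁ + u₀)) ((2 : ℝ)⁻¹ • (u₁ + u₀))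
        + ν * ‖G ((2 : ℝ)⁻¹ • (u₁ + u₀))‖ ^ 2
        - ⟪d ((2 : ℝ)⁻¹ • (u₁ + u₀)), p⟫ + c lam w = 0)
    (h2₀ : ∀ q : Q, ⟪d u₀, q⟫ = 0) (h2₁ : ∀ q : Q, ⟪d u₁, q⟫ = 0)
    (h3 : (2 : ℝ)⁻¹ • (dX₁ + dX₀) = Δt⁻¹ • (X₁ - X₀))
    (h4 : ∀ Y : S, δρ * ⟪Δt⁻¹ • (dX₁ - dX₀), Y⟫ + ⟪P (Gs X₁), Gs Y⟫ - c lam Y = 0)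
    (h5 : ∀ μ : Λ, c μ (w - Δt⁻¹ • (X₁ - X₀)) = 0) :
    (ρf / (2 * Δt)) * (‖u₁‖ ^ 2 - ‖u₀‖ ^ 2)
      + (ν / 4) * ‖G u₁ + G u₀‖ ^ 2
      + (δρ / (2 * Δt)) * (‖dX₁‖ ^ 2 - ‖dX₀‖ ^ 2)
      + (W (Gs X₁) - W (Gs X₀)) / Δt ≤ 0 := by
  have hfluid := fluid_energy_identity G d c b hb ρf ν Δt u₀ u₁ p lam w h1 (h2₀ p) (h2₁ p)
  have hstructure := structure_energy_identity Gs c δρ Δt P X₀ X₁ dX₀ dX₁ lam w h3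
    (h4 (Δt⁻¹ • (X₁ - X₀))) (h5 lam)
  have hconvex : W (Gs X₁) - W (Gs X₀) ≤ ⟪P (Gs X₁), Gs X₁ - Gs X₀⟫ := by
    have h := (hW.le_sub_of_hasFDerivAt (hDW (Gs X₁)) (Gs X₀))
    rw [← hP, ← neg_sub, inner_neg_right] at h
    linarith
  have hconvex' : (W (Gs X₁) - W (Gs X₀)) / Δt ≤ Δt⁻¹ * ⟪P (Gs X₁), Gs X₁ - Gs X₀⟫ := by
    rw [div_eq_inv_mul]
    exact mul_le_mul_of_nonneg_left hconvex (inv_nonneg.mpr hΔt.le)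
  linarith

theorem crank_nicolson_midpoint_per_step_stability
    {V Q S M N Λ : Type*}
    [NormedAddCommGroup V] [InnerProductSpace ℝ V]
    [NormedAddCommGroup Q] [InnerProductSpace ℝ Q]
    [NormedAddCommGroup S] [InnerProductSpace ℝ S]
    [NormedAddCommGroup M] [InnerProductSpace ℝ M]
    [NormedAddCommGroup N] [InnerProductSpace ℝ N]
    [NormedAddCommGroup Λ] [InnerProductSpace ℝ Λ]
    (G : V →ₗ[ℝ] M) (d : V →ₗ[ℝ] Q) (Gs : S →ₗ[ℝ] N)
    (c : Λ →ₗ[ℝ] S →ₗ[ℝ] ℝ) (b : V →ₗ[ℝ] V →ₗ[ℝ] V →ₗ[ℝ] ℝ)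
    (hb : ∀ v w : V, b v w w = 0)
    (ρf δρ ν Δt : ℝ)
    (hρf : 0 ≤ ρf) (hδρ : 0 ≤ δρ) (hν : 0 ≤ ν) (hΔt : 0 < Δt)
    (W : N → ℝ) (hW : ConvexOn ℝ Set.univ W)
    (DW : N → N →L[ℝ] ℝ) (hDW : ∀ F : N, HasFDerivAt W (DW F) F)
    (P : N → N) (hP : ∀ F H : N, ⟪P F, H⟫ = DW F H)
    (u₀ u₁ : V) (p : Q) (X₀ X₁ dX₀ dX₁ : S) (lam : Λ) (w : S)
    (h1 : ρf * ⟪Δt⁻¹ • (u₁ - u₀), (2 : ℝ)⁻¹ • (u₁ + u₀)⟫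
        + b ((2 : ℝ)⁻¹ • (u₁ + u₀)) ((2 : ℝ)⁻¹ • (u₁ + u₀)) ((2 : ℝ)⁻¹ • (u₁ + u₀))
        + ν * ‖G ((2 : ℝ)⁻¹ • (u₁ + u₀))‖ ^ 2
        - ⟪d ((2 : ℝ)⁻¹ • (u₁ + u₀)), p⟫ + c lam w = 0)
    (h2₀ : ∀ q : Q, ⟪d u₀, q⟫ = 0) (h2₁ : ∀ q : Q, ⟪d u₁, q⟫ = 0)
    (h3 : (2 : ℝ)⁻¹ • (dX₁ + dX₀) = Δt⁻¹ • (X₁ - X₀))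
    (h4 : ∀ Y : S, δρ * ⟪Δt⁻¹ • (dX₁ - dX₀), Y⟫ + ⟪P (Gs X₁), Gs Y⟫ - c lam Y = 0)
    (h5 : ∀ μ : Λ, c μ (w - Δt⁻¹ • (X₁ - X₀)) = 0) :
    (ρf / (2 * Δt)) * (‖u₁‖ ^ 2 - ‖u₀‖ ^ 2)
      + (ν / 4) * ‖G u₁ + G u₀‖ ^ 2
      + (δρ / (2 * Δt)) * (‖dX₁‖ ^ 2 - ‖dX₀‖ ^ 2)
      + (W (Gs X₁) - W (Gs X₀)) / Δt ≤ 0 :=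
  crank_nicolson_midpoint_per_step_stability_general G d Gs c b hb ρf δρ ν Δt hΔt W hW DW hDW P hP
    u₀ u₁ p X₀ X₁ dX₀ dX₁ lam w h1 h2₀ h2₁ h3 h4 h5
end

section
/- Unconditional stability bound for the Crank–Nicolson midpoint scheme (summed estimate, abstract form). Let m ≥ 1 and assume given sequences u : ℕ → V, p : ℕ → Q, X, Ẋ : ℕ → S, λ : ℕ → Λ and w : ℕ → S such that for every n with 0 ≤ n ≤ m − 1, writing m_n = (u(n+1) + u(n))/2 and F(j) = G_s X(j): (i) ρ_f ⟨(u(n+1) − u(n))/Δt, m_n⟩ + b(m_n, m_n, m_n) + ν‖G m_n‖² − ⟨d m_n, p(n+1)⟩ + c(λ(n+1), w(n+1)) = 0; (ii) ⟨d u(n), q⟩ = 0 and ⟨d u(n+1), q⟩ = 0 for all q ∈ Q; (iii) (Ẋ(n+1) + Ẋ(n))/2 = (X(n+1) − X(n))/Δt; (iv) δρ ⟨(Ẋ(n+1) − Ẋ(n))/Δt, Y⟩ + ⟨P(F(n+1)), G_s Y⟩ − c(λ(n+1), Y) = 0 for all Y ∈ S; (v) c(μ, w(n+1) − (X(n+1)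 − X(n))/Δt) = 0 for all μ ∈ Λ. Then (ρ_f/(2Δt))‖u(m)‖² + (ν/4) Σ_{n=1}^{m} ‖G u(n) + G u(n−1)‖² + (δρ/(2Δt))‖Ẋ(m)‖² + W(G_s X(m))/Δt ≤ (ρ_f/(2Δt))‖u(0)‖² + (δρ/(2Δt))‖Ẋ(0)‖² + W(G_s X(0))/Δt. -/
/-!
Test the momentum equation with the midpoint velocity and the structure equation with the
discrete structure velocity `(X (n + 1) - X n) / Δt`. The convection and pressure terms vanish,
the two coupling terms agree by the kinematic constraint, and the Crank–Nicolson differences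
become differences of squared norms. Convexity of `W` bounds the elastic term below by the
increment of `W`, so every step dissipates at least `ν / 4 * ‖G u (n + 1) + G u n‖ ^ 2` of
the discrete energy, and summing telescopes.
-/

open scoped RealInnerProductSpace
open Finset

theorem ConvexOn.apply_sub_le_sub_of_hasFDerivAt {E : Type*} [NormedAddCommGroup E]
    [NormedSpace ℝ E] {f : E → ℝ} {f' : E →L[ℝ] ℝ} {x : E} (hf : ConvexOn ℝ Set.univ f)
    (hx : HasFDerivAt f f' x) (y : E) : f' (y - x) ≤ f y - f x := by
  have hline := (AffineMap.lineMap_apply_zero (k := ℝ) x y ▸ hx).comp_hasDerivAt (0 : ℝ)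
    (AffineMap.hasDerivAt_lineMap (a := x) (b := y) (x := (0 : ℝ)))
  have hslope := (hf.comp_affineMap (AffineMap.lineMap x y)).le_slope_of_hasDerivAt
    (Set.mem_univ 0) (Set.mem_univ 1) zero_lt_one hline
  simpa [slope_def_field] using hslope

theorem inner_smul_sub_midpoint {V : Type*} [NormedAddCommGroup V] [InnerProductSpace ℝ V]
    (s : ℝ) (a b : V) :
    ⟪s • (a - b), (2 : ℝ)⁻¹ • (a + b)⟫ = s / 2 * (‖a‖ ^ 2 - ‖b‖ ^ 2) := by
  rw [real_inner_smul_left, real_inner_smul_right, inner_sub_left, inner_add_right,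
    inner_add_right, real_inner_comm b a, real_inner_self_eq_norm_sq,
    real_inner_self_eq_norm_sq]
  ring

theorem add_sum_range_le_of_succ_le {α : Type*} [AddCommGroup α] [PartialOrder α]
    [IsOrderedAddMonoid α] {E D : ℕ → α} {m : ℕ} (h : ∀ n < m, E (n + 1) + D n ≤ E n) :
    E m + ∑ n ∈ range m, D n ≤ E 0 := by
  have hsum := sum_le_sum fun n hn => le_sub_iff_add_le'.2 (h n (mem_range.1 hn))
  rw [sum_range_sub'] at hsum
  exact le_sub_iff_add_le'.1 hsum

theorem midpoint_fluid_energy_eq {V Q M : Type*}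
    [NormedAddCommGroup V] [InnerProductSpace ℝ V]
    [NormedAddCommGroup Q] [InnerProductSpace ℝ Q]
    [NormedAddCommGroup M] [NormedSpace ℝ M]
    {G : V →ₗ[ℝ] M} {d : V →ₗ[ℝ] Q} {b : V →ₗ[ℝ] V →ₗ[ℝ] V →ₗ[ℝ] ℝ} {ρf ν Δt r : ℝ}
    {u u' : V} {p : Q} (hb : ∀ v w : V, b v w w = 0)
    (hdu : ⟪d u, p⟫ = 0) (hdu' : ⟪d u', p⟫ = 0)
    (h : ρf * ⟪Δt⁻¹ • (u' - u), (2 : ℝ)⁻¹ • (u' + u)⟫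
        + b ((2 : ℝ)⁻¹ • (u' + u)) ((2 : ℝ)⁻¹ • (u' + u)) ((2 : ℝ)⁻¹ • (u' + u))
        + ν * ‖G ((2 : ℝ)⁻¹ • (u' + u))‖ ^ 2 - ⟪d ((2 : ℝ)⁻¹ • (u' + u)), p⟫ + r = 0) :
    ρf / (2 * Δt) * (‖u'‖ ^ 2 - ‖u‖ ^ 2) + ν / 4 * ‖G u' + G u‖ ^ 2 + r = 0 := by
  have hpressure : ⟪d ((2 : ℝ)⁻¹ • (u' + u)), p⟫ = 0 := by
    rw [map_smul, map_add, real_inner_smul_left, inner_add_left, hdu, hdu', add_zero, mul_zero]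
  have hviscous : ‖G ((2 : ℝ)⁻¹ • (u' + u))‖ ^ 2 = 4⁻¹ * ‖G u' + G u‖ ^ 2 := by
    rw [map_smul, map_add, norm_smul, mul_pow]
    norm_num
  rw [inner_smul_sub_midpoint, hb, hpressure, hviscous] at h
  rw [← h]
  ring

theorem midpoint_structure_energy_le {S N : Type*}
    [NormedAddCommGroup S] [InnerProductSpace ℝ S]
    [NormedAddCommGroup N] [InnerProductSpace ℝ N]
    {Gs : S →ₗ[ℝ] N} {W : N → ℝ} {W' : N →L[ℝ] ℝ} {P' : N} {δρ Δt r : ℝ}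
    {X X' dX dX' : S} (hΔt : 0 < Δt) (hW : ConvexOn ℝ Set.univ W)
    (hW' : HasFDerivAt W W' (Gs X')) (hP' : ∀ H : N, ⟪P', H⟫ = W' H)
    (hvel : (2 : ℝ)⁻¹ • (dX' + dX) = Δt⁻¹ • (X' - X))
    (h : δρ * ⟪Δt⁻¹ • (dX' - dX), Δt⁻¹ • (X' - X)⟫ + ⟪P', Gs (Δt⁻¹ • (X' - X))⟫ - r = 0) :
    δρ / (2 * Δt) * (‖dX'‖ ^ 2 - ‖dX‖ ^ 2) + (W (Gs X') - W (Gs X)) / Δt ≤ r := by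
  have hconvex : W (Gs X') - W (Gs X) ≤ W' (Gs X' - Gs X) := by
    have hsupport := hW.apply_sub_le_sub_of_hasFDerivAt hW' (Gs X)
    rw [← neg_sub, map_neg] at hsupport
    linarith
  rw [← hvel, inner_smul_sub_midpoint, hvel, map_smul, real_inner_smul_right, hP',
    map_sub] at h
  have hscaled : (W (Gs X') - W (Gs X)) / Δt ≤ Δt⁻¹ * W' (Gs X' - Gs X) := by
    rw [div_eq_inv_mul]
    exact mul_le_mul_of_nonneg_left hconvex (inv_nonneg.2 hΔt.le)
  linear_combination h + hscaled

theorem crank_nicolson_midpoint_summed_stability_general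
    {V Q S M N Λ : Type*}
    [NormedAddCommGroup V] [InnerProductSpace ℝ V]
    [NormedAddCommGroup Q] [InnerProductSpace ℝ Q]
    [NormedAddCommGroup S] [InnerProductSpace ℝ S]
    [NormedAddCommGroup M] [InnerProductSpace ℝ M]
    [NormedAddCommGroup N] [InnerProductSpace ℝ N]
    [NormedAddCommGroup Λ] [InnerProductSpace ℝ Λ]
    (G : V →ₗ[ℝ] M) (d : V →ₗ[ℝ] Q) (Gs : S →ₗ[ℝ] N)
    (c : Λ →ₗ[ℝ] S →ₗ[ℝ] ℝ) (b : V →ₗ[ℝ] V →ₗ[ℝ] V →ₗ[ℝ] ℝ)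
    (hb : ∀ v w : V, b v w w = 0)
    (ρf δρ ν Δt : ℝ)
    (hΔt : 0 < Δt)
    (W : N → ℝ) (hW : ConvexOn ℝ Set.univ W)
    (DW : N → N →L[ℝ] ℝ) (hDW : ∀ F : N, HasFDerivAt W (DW F) F)
    (P : N → N) (hP : ∀ F H : N, ⟪P F, H⟫ = DW F H)
    (m : ℕ)
    (u : ℕ → V) (p : ℕ → Q) (X dX : ℕ → S) (lam : ℕ → Λ) (w : ℕ → S)
    (h1 : ∀ n, n ≤ m - 1 →
      ρf * ⟪Δt⁻¹ • (u (n + 1) - u n), (2 : ℝ)⁻¹ • (u (n + 1) + u n)⟫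
        + b ((2 : ℝ)⁻¹ • (u (n + 1) + u n)) ((2 : ℝ)⁻¹ • (u (n + 1) + u n))
            ((2 : ℝ)⁻¹ • (u (n + 1) + u n))
        + ν * ‖G ((2 : ℝ)⁻¹ • (u (n + 1) + u n))‖ ^ 2
        - ⟪d ((2 : ℝ)⁻¹ • (u (n + 1) + u n)), p (n + 1)⟫
        + c (lam (n + 1)) (w (n + 1)) = 0)
    (h2 : ∀ n, n ≤ m - 1 → ∀ q : Q, ⟪d (u n), q⟫ = 0 ∧ ⟪d (u (n + 1)), q⟫ = 0)
    (h3 : ∀ n, n ≤ m - 1 → (2 : ℝ)⁻¹ • (dX (n + 1) + dX n) = Δt⁻¹ • (X (n + 1) - X n))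
    (h4 : ∀ n, n ≤ m - 1 → ∀ Y : S,
      δρ * ⟪Δt⁻¹ • (dX (n + 1) - dX n), Y⟫ + ⟪P (Gs (X (n + 1))), Gs Y⟫
        - c (lam (n + 1)) Y = 0)
    (h5 : ∀ n, n ≤ m - 1 → ∀ μ : Λ, c μ (w (n + 1) - Δt⁻¹ • (X (n + 1) - X n)) = 0) :
    (ρf / (2 * Δt)) * ‖u m‖ ^ 2
      + (ν / 4) * ∑ n ∈ Finset.Icc 1 m, ‖G (u n) + G (u (n - 1))‖ ^ 2
      + (δρ / (2 * Δt)) * ‖dX m‖ ^ 2 + W (Gs (X m)) / Δt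
      ≤ (ρf / (2 * Δt)) * ‖u 0‖ ^ 2 + (δρ / (2 * Δt)) * ‖dX 0‖ ^ 2
        + W (Gs (X 0)) / Δt := by
  set E : ℕ → ℝ := fun k =>
    ρf / (2 * Δt) * ‖u k‖ ^ 2 + δρ / (2 * Δt) * ‖dX k‖ ^ 2 + W (Gs (X k)) / Δt
  have step : ∀ n < m, E (n + 1) + ν / 4 * ‖G (u (n + 1)) + G (u n)‖ ^ 2 ≤ E n := by
    intro n hn
    replace hn : n ≤ m - 1 := by omega
    have fluid := midpoint_fluid_energy_eq hb (h2 n hn _).1 (h2 n hn _).2 (h1 n hn)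
    have solid := midpoint_structure_energy_le hΔt hW (hDW _) (hP _) (h3 n hn)
      (h4 n hn (Δt⁻¹ • (X (n + 1) - X n)))
    have coupling := h5 n hn (lam (n + 1))
    rw [map_sub, sub_eq_zero] at coupling
    simp only [E]
    linarith [div_sub_div_same (W (Gs (X (n + 1)))) (W (Gs (X n))) Δt]
  have summed := add_sum_range_le_of_succ_le step
  have hreindex : ∑ n ∈ Icc 1 m, ‖G (u n) + G (u (n - 1))‖ ^ 2
      = ∑ n ∈ range m, ‖G (u (n + 1)) + G (u n)‖ ^ 2 := by
    simpa [Ico_add_one_right_eq_Icc] using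
      (sum_Ico_add' (fun n => ‖G (u n) + G (u (n - 1))‖ ^ 2) 0 m 1).symm
  rw [← mul_sum] at summed
  rw [hreindex]
  linarith

theorem crank_nicolson_midpoint_summed_stability
    {V Q S M N Λ : Type*}
    [NormedAddCommGroup V] [InnerProductSpace ℝ V]
    [NormedAddCommGroup Q] [InnerProductSpace ℝ Q]
    [NormedAddCommGroup S] [InnerProductSpace ℝ S]
    [NormedAddCommGroup M] [InnerProductSpace ℝ M]
    [NormedAddCommGroup N] [InnerProductSpace ℝ N]
    [NormedAddCommGroup Λ] [InnerProductSpace ℝ Λ]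
    (G : V →ₗ[ℝ] M) (d : V →ₗ[ℝ] Q) (Gs : S →ₗ[ℝ] N)
    (c : Λ →ₗ[ℝ] S →ₗ[ℝ] ℝ) (b : V →ₗ[ℝ] V →ₗ[ℝ] V →ₗ[ℝ] ℝ)
    (hb : ∀ v w : V, b v w w = 0)
    (ρf δρ ν Δt : ℝ)
    (hρf : 0 ≤ ρf) (hδρ : 0 ≤ δρ) (hν : 0 ≤ ν) (hΔt : 0 < Δt)
    (W : N → ℝ) (hW : ConvexOn ℝ Set.univ W)
    (DW : N → N →L[ℝ] ℝ) (hDW : ∀ F : N, HasFDerivAt W (DW F) F)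
    (P : N → N) (hP : ∀ F H : N, ⟪P F, H⟫ = DW F H)
    (m : ℕ) (hm : 1 ≤ m)
    (u : ℕ → V) (p : ℕ → Q) (X dX : ℕ → S) (lam : ℕ → Λ) (w : ℕ → S)
    (h1 : ∀ n, n ≤ m - 1 →
      ρf * ⟪Δt⁻¹ • (u (n + 1) - u n), (2 : ℝ)⁻¹ • (u (n + 1) + u n)⟫
        + b ((2 : ℝ)⁻¹ • (u (n + 1) + u n)) ((2 : ℝ)⁻¹ • (u (n + 1) + u n))
            ((2 : ℝ)⁻¹ • (u (n + 1) + u n))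
        + ν * ‖G ((2 : ℝ)⁻¹ • (u (n + 1) + u n))‖ ^ 2
        - ⟪d ((2 : ℝ)⁻¹ • (u (n + 1) + u n)), p (n + 1)⟫
        + c (lam (n + 1)) (w (n + 1)) = 0)
    (h2 : ∀ n, n ≤ m - 1 → ∀ q : Q, ⟪d (u n), q⟫ = 0 ∧ ⟪d (u (n + 1)), q⟫ = 0)
    (h3 : ∀ n, n ≤ m - 1 → (2 : ℝ)⁻¹ • (dX (n + 1) + dX n) = Δt⁻¹ • (X (n + 1) - X n))
    (h4 : ∀ n, n ≤ m - 1 → ∀ Y : S,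
      δρ * ⟪Δt⁻¹ • (dX (n + 1) - dX n), Y⟫ + ⟪P (Gs (X (n + 1))), Gs Y⟫
        - c (lam (n + 1)) Y = 0)
    (h5 : ∀ n, n ≤ m - 1 → ∀ μ : Λ, c μ (w (n + 1) - Δt⁻¹ • (X (n + 1) - X n)) = 0) :
    (ρf / (2 * Δt)) * ‖u m‖ ^ 2
      + (ν / 4) * ∑ n ∈ Finset.Icc 1 m, ‖G (u n) + G (u (n - 1))‖ ^ 2
      + (δρ / (2 * Δt)) * ‖dX m‖ ^ 2 + W (Gs (X m)) / Δt
      ≤ (ρf / (2 * Δt)) * ‖u 0‖ ^ 2 + (δρ / (2 * Δt)) * ‖dX 0‖ ^ 2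
        + W (Gs (X 0)) / Δt :=
  crank_nicolson_midpoint_summed_stability_general G d Gs c b hb ρf δρ ν Δt hΔt W hW DW hDW P hP m u
    p X dX lam w h1 h2 h3 h4 h5
end
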